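/- arXiv:1001.1802 — 6 statements merged into one kernel-verified Lean document; each statement's English description precedes it below -/
import Mathlib

section
/- For all x y : F, the generalized fusion exponential applied to the vector of powers of g satisfies E (Φ x) y = Φ (x * y). (This is the defining correctness property of the construction, equation (13): raising g^x to the power y yields g^{xy}.) -/
/-! Expanding `x = ∑ⱼ xⱼ ϑʲ`, the `i`-th coordinate of `x * y` is `∑ⱼ xⱼ · (ϑʲ y)ᵢ`, and this
bilinear sum is exactly the exponent that the product defining `E` accumulates on `g`; since
`g ^ q = 1`, exponents may be read in `ZMod q`. -/

open Finset

theorem pow_val_natCast_of_pow_eq_one {M : Type*} [Monoid M] {a : M} {q : ℕ} (ha : a ^ q = 1)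
    (m : ℕ) : a ^ (m : ZMod q).val = a ^ m := by
  rw [ZMod.val_natCast, ← pow_eq_pow_mod m ha]

theorem prod_pow_val_pow_val_of_pow_eq_one {M ι : Type*} [CommMonoid M] [Fintype ι] {a : M}
    {q : ℕ} [NeZero q] (ha : a ^ q = 1) (u v : ι → ZMod q) :
    ∏ j, (a ^ (u j).val) ^ (v j).val = a ^ (∑ j, u j * v j).val := by
  simp_rw [← pow_mul]
  rw [prod_pow_eq_pow_sum, ← pow_val_natCast_of_pow_eq_one ha]
  simp only [Nat.cast_sum, Nat.cast_mul, ZMod.natCast_zmod_val]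

theorem Module.Basis.repr_mul_eq_sum {R A ι : Type*} [CommSemiring R] [Semiring A] [Algebra R A]
    [Fintype ι] (B : Module.Basis ι R A) (x y : A) (i : ι) :
    B.repr (x * y) i = ∑ j, B.repr x j * B.repr (B j * y) i := by
  conv_lhs => rw [← B.sum_repr x, sum_mul]
  simp only [smul_mul_assoc, map_sum, map_smul, Finsupp.finsetSum_apply, Finsupp.smul_apply,
    smul_eq_mul]

theorem fusionExp_phi_general
    {q n : ℕ}
    {G : Type*} [CommGroup G] [Fintype G] (hcard : Fintype.card G = q)
    (f : Polynomial (ZMod q))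
    (B : Module.Basis (Fin n) (ZMod q) (AdjoinRoot f))
    (hB : ∀ i : Fin n, B i = AdjoinRoot.root f ^ (i : ℕ))
    (E : (Fin n → G) → AdjoinRoot f → (Fin n → G))
    (hE : ∀ (gg : Fin n → G) (y : AdjoinRoot f) (i : Fin n),
      E gg y i = ∏ j : Fin n, gg j ^ (B.repr (AdjoinRoot.root f ^ (j : ℕ) * y) i).val)
    (g : G)
    (Φ : AdjoinRoot f → (Fin n → G))
    (hΦ : ∀ (x : AdjoinRoot f) (i : Fin n), Φ x i = g ^ (B.repr x i).val) :
    ∀ x y : AdjoinRoot f, E (Φ x) y = Φ (x * y) := by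
  have : NeZero q := ⟨hcard ▸ Fintype.card_ne_zero⟩
  have hg : g ^ q = 1 := hcard ▸ pow_card_eq_one
  intro x y
  funext i
  rw [hE, hΦ, B.repr_mul_eq_sum]
  simp only [hΦ, hB]
  exact prod_pow_val_pow_val_of_pow_eq_one hg _ _

/-- Equation (13): raising `g^x` (encoded as the vector `Φ x`) to the fusion power `y`
yields `g^{x*y}`, i.e. `E (Φ x) y = Φ (x * y)`. -/
theorem fusionExp_phi
    {q n : ℕ} (hq : Nat.Prime q) (hn : 1 ≤ n)
    {G : Type*} [CommGroup G] [Fintype G] (hcard : Fintype.card G = q)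
    (f : Polynomial (ZMod q)) (hmonic : f.Monic) (hirr : Irreducible f)
    (hdeg : f.natDegree = n)
    (B : Module.Basis (Fin n) (ZMod q) (AdjoinRoot f))
    (hB : ∀ i : Fin n, B i = AdjoinRoot.root f ^ (i : ℕ))
    (E : (Fin n → G) → AdjoinRoot f → (Fin n → G))
    (hE : ∀ (gg : Fin n → G) (y : AdjoinRoot f) (i : Fin n),
      E gg y i = ∏ j : Fin n, gg j ^ (B.repr (AdjoinRoot.root f ^ (j : ℕ) * y) i).val)
    (g : G) (hg : ∀ h : G, ∃ k : ℕ, h = g ^ k)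
    (Φ : AdjoinRoot f → (Fin n → G))
    (hΦ : ∀ (x : AdjoinRoot f) (i : Fin n), Φ x i = g ^ (B.repr x i).val) :
    ∀ x y : AdjoinRoot f, E (Φ x) y = Φ (x * y) :=
  fusionExp_phi_general hcard f B hB E hE g Φ hΦ
end

section
/- The generalized fusion exponential satisfies the first exponentiation law for every base: for all 𝗀 : Fin n → G and all x y : F, E (E 𝗀 x) y = E 𝗀 (x * y). (Property (1) of exponentiation, fulfilled by construction.) -/
/-!
Write `M y` for the matrix of multiplication by `y` in the power basis; the coefficients
`lam i j y` are exactly its entries, so `E 𝗀 y` is the vector `𝗀 ^ M y` obtained by letting a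
`ZMod q`-matrix act on a vector of elements of a group of exponent `q`. This action satisfies
`(𝗀 ^ A) ^ B = 𝗀 ^ (B * A)`, and `y ↦ M y` is multiplicative with commutative source.
-/

section MatrixPow

variable {M : Type*} [CommMonoid M] {q : ℕ}

theorem pow_val_natCast {g : M} (hg : g ^ q = 1) (m : ℕ) : g ^ (m : ZMod q).val = g ^ m := by
  rw [ZMod.val_natCast, ← pow_eq_pow_mod m hg]

theorem pow_val_mul {g : M} (hg : g ^ q = 1) (a b : ZMod q) :
    g ^ (a * b).val = (g ^ b.val) ^ a.val := by
  rw [← pow_mul, ZMod.val_mul, ← pow_eq_pow_mod _ hg, mul_comm]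

theorem prod_pow_val [NeZero q] {ι : Type*} (s : Finset ι) {g : M} (hg : g ^ q = 1)
    (a : ι → ZMod q) : ∏ j ∈ s, g ^ (a j).val = g ^ (∑ j ∈ s, a j).val := by
  rw [Finset.prod_pow_eq_pow_sum, ← pow_val_natCast hg]
  push_cast
  simp only [ZMod.natCast_zmod_val]

def matrixPow {ι κ : Type*} [Fintype κ] (A : Matrix ι κ (ZMod q)) (g : κ → M) : ι → M :=
  fun i => ∏ j, g j ^ (A i j).val

theorem matrixPow_matrixPow [NeZero q] (hM : ∀ g : M, g ^ q = 1) {ι κ μ : Type*}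
    [Fintype κ] [Fintype μ] (A : Matrix ι κ (ZMod q)) (B : Matrix κ μ (ZMod q)) (g : μ → M) :
    matrixPow A (matrixPow B g) = matrixPow (A * B) g := by
  funext i
  calc ∏ j, (∏ k, g k ^ (B j k).val) ^ (A i j).val
      = ∏ j, ∏ k, g k ^ (A i j * B j k).val := by
        simp only [← Finset.prod_pow, pow_val_mul (hM _)]
    _ = ∏ k, ∏ j, g k ^ (A i j * B j k).val := Finset.prod_comm
    _ = ∏ k, g k ^ ((A * B) i k).val := by
        simp only [prod_pow_val _ (hM _), Matrix.mul_apply]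

end MatrixPow

theorem fusionExp_mul_general
    {q n : ℕ}
    {G : Type*} [CommGroup G] [Fintype G] (hcard : Fintype.card G = q)
    (f : Polynomial (ZMod q))
    (B : Module.Basis (Fin n) (ZMod q) (AdjoinRoot f))
    (hB : ∀ i : Fin n, B i = AdjoinRoot.root f ^ (i : ℕ))
    (E : (Fin n → G) → AdjoinRoot f → (Fin n → G))
    (hE : ∀ (gg : Fin n → G) (y : AdjoinRoot f) (i : Fin n),
      E gg y i = ∏ j : Fin n, gg j ^ (B.repr (AdjoinRoot.root f ^ (j : ℕ) * y) i).val) :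
    ∀ (gg : Fin n → G) (x y : AdjoinRoot f), E (E gg x) y = E gg (x * y) := by
  subst hcard
  have hE_matrixPow : ∀ gg y, E gg y = matrixPow (Algebra.leftMulMatrix B y) gg := by
    intro gg y
    funext i
    simp only [hE, matrixPow, Algebra.leftMulMatrix_eq_repr_mul, hB, mul_comm y]
  intro gg x y
  rw [hE_matrixPow, hE_matrixPow, hE_matrixPow, matrixPow_matrixPow (fun _ => pow_card_eq_one),
    ← map_mul, mul_comm]

/-- Property (1): for every base `gg`, `(gg^x)^y = gg^(x*y)` for the generalized
fusion exponential. -/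
theorem fusionExp_mul
    {q n : ℕ} (hq : Nat.Prime q) (hn : 1 ≤ n)
    {G : Type*} [CommGroup G] [Fintype G] (hcard : Fintype.card G = q)
    (f : Polynomial (ZMod q)) (hmonic : f.Monic) (hirr : Irreducible f)
    (hdeg : f.natDegree = n)
    (B : Module.Basis (Fin n) (ZMod q) (AdjoinRoot f))
    (hB : ∀ i : Fin n, B i = AdjoinRoot.root f ^ (i : ℕ))
    (E : (Fin n → G) → AdjoinRoot f → (Fin n → G))
    (hE : ∀ (gg : Fin n → G) (y : AdjoinRoot f) (i : Fin n),
      E gg y i = ∏ j : Fin n, gg j ^ (B.repr (AdjoinRoot.root f ^ (j : ℕ) * y) i).val) :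
    ∀ (gg : Fin n → G) (x y : AdjoinRoot f), E (E gg x) y = E gg (x * y) :=
  fusionExp_mul_general hcard f B hB E hE
end

section
/- The generalized fusion exponential satisfies the second exponentiation law: for all 𝗀 : Fin n → G and all x y : F, E 𝗀 (x + y) = (E 𝗀 x) * (E 𝗀 y), where the product on the right is componentwise multiplication in Fin n → G. (Property (2), proved in Section 4.2 via linearity of the coefficient functions.) -/
/-! Each coefficient `y ↦ B.repr (ϑ ^ j * y) i` is additive, and since `g ^ q = 1` for every
`g : G`, the map `c ↦ g ^ c.val` is an additive character of `ZMod q`; a product of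
characters composed with additive maps turns sums into products. -/

theorem fusionExp_add_general
    {q n : ℕ}
    {G : Type*} [CommGroup G] [Fintype G] (hcard : Fintype.card G = q)
    (f : Polynomial (ZMod q))
    (B : Module.Basis (Fin n) (ZMod q) (AdjoinRoot f))
    (E : (Fin n → G) → AdjoinRoot f → (Fin n → G))
    (hE : ∀ (gg : Fin n → G) (y : AdjoinRoot f) (i : Fin n),
      E gg y i = ∏ j : Fin n, gg j ^ (B.repr (AdjoinRoot.root f ^ (j : ℕ) * y) i).val) :
    ∀ (gg : Fin n → G) (x y : AdjoinRoot f), E gg (x + y) = E gg x * E gg y := by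
  intro gg x y
  have : NeZero q := ⟨hcard ▸ Fintype.card_ne_zero⟩
  have hpow : ∀ j, gg j ^ q = 1 := fun j => hcard ▸ pow_card_eq_one
  funext i
  simp only [hE, Pi.mul_apply, ← AddChar.zmodChar_apply (hpow _), mul_add, map_add,
    Finsupp.add_apply, AddChar.map_add_eq_mul, Finset.prod_mul_distrib]

/-- Property (2): `gg^(x+y) = gg^x * gg^y` for the generalized fusion exponential,
with componentwise multiplication in `Fin n → G`. -/
theorem fusionExp_add
    {q n : ℕ} (hq : Nat.Prime q) (hn : 1 ≤ n)
    {G : Type*} [CommGroup G] [Fintype G] (hcard : Fintype.card G = q)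
    (f : Polynomial (ZMod q)) (hmonic : f.Monic) (hirr : Irreducible f)
    (hdeg : f.natDegree = n)
    (B : Module.Basis (Fin n) (ZMod q) (AdjoinRoot f))
    (hB : ∀ i : Fin n, B i = AdjoinRoot.root f ^ (i : ℕ))
    (E : (Fin n → G) → AdjoinRoot f → (Fin n → G))
    (hE : ∀ (gg : Fin n → G) (y : AdjoinRoot f) (i : Fin n),
      E gg y i = ∏ j : Fin n, gg j ^ (B.repr (AdjoinRoot.root f ^ (j : ℕ) * y) i).val) :
    ∀ (gg : Fin n → G) (x y : AdjoinRoot f), E gg (x + y) = E gg x * E gg y :=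
  fusionExp_add_general hcard f B E hE
end

section
/- (Theorem 1: The Generalized Fusion Exponential Function is bijective.) For every 𝗀 : Fin n → G with 𝗀 ≠ (fun _ => 1), the map F → (Fin n → G) given by x ↦ E 𝗀 x is bijective. -/
/-!
A group `G` of prime order `q` is isomorphic to `Multiplicative (ZMod q)`; write `a j ∈ ZMod q`
for the logarithm of `𝗀 j`. Under this isomorphism the `i`-th coordinate of `E 𝗀 y` becomes
`∑ j, a j * lam i j y`, the `i`-th coordinate of `α * y` with `α = ∑ j, a j • ϑ ^ j`.
So `E 𝗀` is multiplication by `α` followed by the coordinate isomorphism of the basis, and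
`α ≠ 0` exactly when `𝗀 ≠ 1`; multiplication by a nonzero element of the field `F` is
bijective.
-/

open Module Function

theorem Module.Basis.repr_sum_smul_mul {R A ι : Type*} [CommSemiring R] [Semiring A] [Algebra R A]
    [Fintype ι] (B : Basis ι R A) (a : ι → R) (y : A) (i : ι) :
    B.repr ((∑ j, a j • B j) * y) i = ∑ j, a j * B.repr (B j * y) i := by
  simp only [Finset.sum_mul, smul_mul_assoc, map_sum, map_smul, Finsupp.finsetSum_apply,
    Finsupp.smul_apply, smul_eq_mul]

theorem toAdd_map_pow_val {q : ℕ} [NeZero q] {G F : Type*} [Monoid G]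
    [FunLike F G (Multiplicative (ZMod q))] [MonoidHomClass F G (Multiplicative (ZMod q))]
    (φ : F) (x : G) (c : ZMod q) :
    (φ (x ^ c.val)).toAdd = c * (φ x).toAdd := by
  rw [map_pow, toAdd_pow, nsmul_eq_mul, ZMod.natCast_zmod_val]

section FusionExp

variable {q : ℕ} {ι G A : Type*} [Fintype ι] [CommMonoid G]

/-- With `B` the power basis of `ϑ`, `B j * y = ϑ ^ j * y`, so this is the paper's `E`. -/
noncomputable def fusionExp [Semiring A] [Algebra (ZMod q) A] (B : Basis ι (ZMod q) A)
    (g : ι → G) (y : A) : ι → G :=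
  fun i => ∏ j, g j ^ (B.repr (B j * y) i).val

theorem toAdd_fusionExp [NeZero q] [Semiring A] [Algebra (ZMod q) A] {F : Type*}
    [FunLike F G (Multiplicative (ZMod q))] [MonoidHomClass F G (Multiplicative (ZMod q))]
    (φ : F) (B : Basis ι (ZMod q) A) (g : ι → G) (y : A) (i : ι) :
    (φ (fusionExp B g y i)).toAdd = B.repr ((∑ j, (φ (g j)).toAdd • B j) * y) i := by
  simp only [fusionExp, map_prod, toAdd_prod, toAdd_map_pow_val, B.repr_sum_smul_mul, mul_comm]

theorem fusionExp_bijective_of_mulEquiv [NeZero q] [DivisionRing A] [Algebra (ZMod q) A]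
    (e : G ≃* Multiplicative (ZMod q)) (B : Basis ι (ZMod q) A) {g : ι → G} (hg : g ≠ 1) :
    Bijective (fusionExp B g) := by
  set α := ∑ j, (e (g j)).toAdd • B j
  have hα : α ≠ 0 := fun hα => hg <| funext fun j => by
    simpa using Fintype.linearIndependent_iff.mp B.linearIndependent _ hα j
  have hfactor : fusionExp B g =
      (fun v i => e.symm (.ofAdd (v i))) ∘ B.equivFun ∘ (α * ·) := by
    funext y i
    rw [comp_apply, comp_apply, B.equivFun_apply, MulEquiv.eq_symm_apply, ← toAdd_fusionExp,
      ofAdd_toAdd]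
  rw [hfactor]
  exact ((Equiv.piCongrRight fun _ => Multiplicative.ofAdd.trans e.symm.toEquiv).bijective.comp
    B.equivFun.bijective).comp (mulLeft_bijective₀ α hα)

end FusionExp

theorem fusionExp_bijective_general
    {q n : ℕ} (hq : Nat.Prime q)
    {G : Type*} [CommGroup G] [Fintype G] (hcard : Fintype.card G = q)
    (f : Polynomial (ZMod q)) (hirr : Irreducible f)
    (B : Module.Basis (Fin n) (ZMod q) (AdjoinRoot f))
    (hB : ∀ i : Fin n, B i = AdjoinRoot.root f ^ (i : ℕ))
    (E : (Fin n → G) → AdjoinRoot f → (Fin n → G))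
    (hE : ∀ (gg : Fin n → G) (y : AdjoinRoot f) (i : Fin n),
      E gg y i = ∏ j : Fin n, gg j ^ (B.repr (AdjoinRoot.root f ^ (j : ℕ) * y) i).val) :
    ∀ gg : Fin n → G, gg ≠ (fun _ => 1) → Function.Bijective (fun x : AdjoinRoot f => E gg x) := by
  have : Fact q.Prime := ⟨hq⟩
  have : Fact (Irreducible f) := ⟨hirr⟩
  intro gg hgg
  have hE_eq : (fun x => E gg x) = fusionExp B gg := by
    funext y i
    simp only [hE, fusionExp, hB]
  rw [hE_eq]
  exact fusionExp_bijective_of_mulEquiv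
    (mulEquivOfPrimeCardEq (Nat.card_eq_fintype_card.trans hcard) (by simp)) B hgg

/-- Theorem 1: the Generalized Fusion Exponential Function is bijective for every
base `gg ≠ (1,…,1)`. -/
theorem fusionExp_bijective
    {q n : ℕ} (hq : Nat.Prime q) (hn : 1 ≤ n)
    {G : Type*} [CommGroup G] [Fintype G] (hcard : Fintype.card G = q)
    (f : Polynomial (ZMod q)) (hmonic : f.Monic) (hirr : Irreducible f)
    (hdeg : f.natDegree = n)
    (B : Module.Basis (Fin n) (ZMod q) (AdjoinRoot f))
    (hB : ∀ i : Fin n, B i = AdjoinRoot.root f ^ (i : ℕ))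
    (E : (Fin n → G) → AdjoinRoot f → (Fin n → G))
    (hE : ∀ (gg : Fin n → G) (y : AdjoinRoot f) (i : Fin n),
      E gg y i = ∏ j : Fin n, gg j ^ (B.repr (AdjoinRoot.root f ^ (j : ℕ) * y) i).val) :
    ∀ gg : Fin n → G, gg ≠ (fun _ => 1) → Function.Bijective (fun x : AdjoinRoot f => E gg x) :=
  fusionExp_bijective_general hq hcard f hirr B hB E hE
end

section
/- (Key identity in the reduction DLP ≤ n-FDLP of Theorem 3, also underlying Theorems 4 and 5.) Define ι : G → (Fin n → G) by ι h i := if i = 0 then h else 1. Then for every h : G and every x : ZMod q, E (ι h) (algebraMap (ZMod q) F x) = ι (h ^ x). In particular, raising (h,1,…,1) to the fusion power (x,0,…,0) yields (h^x,1,…,1). -/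
/-! The exponent matrix `(lam i j (algebraMap x))` of a scalar is `x` times the identity, since
`ϑ ^ j * x = x • B j`; so each coordinate of `E g (algebraMap x)` is just `g i ^ x`. -/

theorem Module.Basis.repr_mul_algebraMap {R A ι : Type*} [CommSemiring R] [Semiring A]
    [Algebra R A] (B : Module.Basis ι R A) (a : A) (x : R) :
    B.repr (a * algebraMap R A x) = x • B.repr a := by
  rw [← Algebra.commutes, ← Algebra.smul_def, map_smul]

theorem Finset.prod_pow_val_single {M ι : Type*} [CommMonoid M] [Fintype ι] [DecidableEq ι]
    {q : ℕ} (g : ι → M) (i : ι) (x : ZMod q) :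
    ∏ j, g j ^ (Finsupp.single j x i).val = g i ^ x.val := by
  simp only [Finsupp.single_apply, apply_ite ZMod.val, ZMod.val_zero, pow_ite, pow_zero,
    Finset.prod_ite_eq', Finset.mem_univ, if_true]

theorem fusionExp_scalar_embedding_general
    {q n : ℕ}
    {G : Type*} [CommGroup G]
    (f : Polynomial (ZMod q))
    (B : Module.Basis (Fin n) (ZMod q) (AdjoinRoot f))
    (hB : ∀ i : Fin n, B i = AdjoinRoot.root f ^ (i : ℕ))
    (E : (Fin n → G) → AdjoinRoot f → (Fin n → G))
    (hE : ∀ (gg : Fin n → G) (y : AdjoinRoot f) (i : Fin n),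
      E gg y i = ∏ j : Fin n, gg j ^ (B.repr (AdjoinRoot.root f ^ (j : ℕ) * y) i).val)
    (ι : G → (Fin n → G))
    (hι : ∀ (h : G) (i : Fin n), ι h i = if (i : ℕ) = 0 then h else 1) :
    ∀ (h : G) (x : ZMod q),
      E (ι h) (algebraMap (ZMod q) (AdjoinRoot f) x) = ι (h ^ x.val) := by
  intro h x
  funext i
  have hrepr (j : Fin n) :
      B.repr (AdjoinRoot.root f ^ (j : ℕ) * algebraMap _ _ x) = Finsupp.single j x := by
    rw [← hB, B.repr_mul_algebraMap, B.repr_self, Finsupp.smul_single_one]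
  simp only [hE, hrepr]
  rw [Finset.prod_pow_val_single, hι, hι, ite_pow, one_pow]

/-- Key identity in the reduction DLP ≤ n-FDLP (Theorem 3): raising
`ι h = (h,1,…,1)` to the fusion power `(x,0,…,0)` (the image of `x : ZMod q` under
the algebra map into `F`) yields `ι (h^x) = (h^x,1,…,1)`. -/
theorem fusionExp_scalar_embedding
    {q n : ℕ} (hq : Nat.Prime q) (hn : 1 ≤ n)
    {G : Type*} [CommGroup G] [Fintype G] (hcard : Fintype.card G = q)
    (f : Polynomial (ZMod q)) (hmonic : f.Monic) (hirr : Irreducible f)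
    (hdeg : f.natDegree = n)
    (B : Module.Basis (Fin n) (ZMod q) (AdjoinRoot f))
    (hB : ∀ i : Fin n, B i = AdjoinRoot.root f ^ (i : ℕ))
    (E : (Fin n → G) → AdjoinRoot f → (Fin n → G))
    (hE : ∀ (gg : Fin n → G) (y : AdjoinRoot f) (i : Fin n),
      E gg y i = ∏ j : Fin n, gg j ^ (B.repr (AdjoinRoot.root f ^ (j : ℕ) * y) i).val)
    (ι : G → (Fin n → G))
    (hι : ∀ (h : G) (i : Fin n), ι h i = if (i : ℕ) = 0 then h else 1) :
    ∀ (h : G) (x : ZMod q),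
      E (ι h) (algebraMap (ZMod q) (AdjoinRoot f) x) = ι (h ^ x.val) :=
  fusionExp_scalar_embedding_general f B hB E hE ι hι
end

section
/- (Basic Fusion Exponential Function, law (1).) For all a b : G and all c d e f : ZMod q, P (P (a, b) (c, d)) (e, f) = P (a, b) (c*e - d*f, c*f + d*e); that is, iterated basic fusion exponentiation corresponds to the Gaussian-integer-style multiplication of exponent pairs. -/
/-!
Since `G` has order `q`, every `g : G` satisfies `g ^ q = 1`, so `x ↦ g ^ x.val` is a homomorphism
from `(ZMod q, +)` to `G` that turns products of exponents into iterated powers. Expanding both sides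
of the law with these rules leaves an identity between products of the same four powers of `a` and
`b` in a commutative group.
-/

namespace ZMod

section PowVal

variable {n : ℕ} {M : Type*} [Monoid M] {g : M}

theorem pow_val_add [NeZero n] (hg : g ^ n = 1) (x y : ZMod n) :
    g ^ (x + y).val = g ^ x.val * g ^ y.val := by
  rw [val_add, ← pow_eq_pow_mod _ hg, pow_add]

theorem pow_val_mul (hg : g ^ n = 1) (x y : ZMod n) :
    g ^ (x * y).val = (g ^ x.val) ^ y.val := by
  rw [val_mul, ← pow_eq_pow_mod _ hg, pow_mul]

end PowVal

theorem pow_val_sub {n : ℕ} [NeZero n] {G : Type*} [Group G] {g : G} (hg : g ^ n = 1)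
    (x y : ZMod n) : g ^ (x - y).val = g ^ x.val * (g ^ y.val)⁻¹ := by
  rw [eq_mul_inv_iff_mul_eq, ← pow_val_add hg, sub_add_cancel]

end ZMod

theorem basicFusionExp_mul_general
    {q : ℕ}
    {G : Type*} [CommGroup G] [Fintype G] (hcard : Fintype.card G = q)
    (P : G × G → ZMod q × ZMod q → G × G)
    (hP : ∀ (a b : G) (e f : ZMod q),
      P (a, b) (e, f) = (a ^ e.val * (b ^ f.val)⁻¹, a ^ f.val * b ^ e.val)) :
    ∀ (a b : G) (c d e f : ZMod q),
      P (P (a, b) (c, d)) (e, f) = P (a, b) (c * e - d * f, c * f + d * e) := by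
  have : NeZero q := ⟨hcard ▸ Fintype.card_ne_zero⟩
  have hpow : ∀ g : G, g ^ q = 1 := fun g => hcard ▸ pow_card_eq_one
  intro a b c d e f
  simp only [hP, ZMod.pow_val_add (hpow _), ZMod.pow_val_sub (hpow _), ZMod.pow_val_mul (hpow _),
    mul_pow, inv_pow, mul_inv, Prod.mk.injEq]
  constructor <;> simp only [mul_assoc, mul_comm, mul_left_comm]

/-- Basic fusion exponential, law (1): iterated basic fusion exponentiation
corresponds to Gaussian-integer-style multiplication of exponent pairs. -/
theorem basicFusionExp_mul
    {q : ℕ} (hq : Nat.Prime q)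
    {G : Type*} [CommGroup G] [Fintype G] (hcard : Fintype.card G = q)
    (P : G × G → ZMod q × ZMod q → G × G)
    (hP : ∀ (a b : G) (e f : ZMod q),
      P (a, b) (e, f) = (a ^ e.val * (b ^ f.val)⁻¹, a ^ f.val * b ^ e.val)) :
    ∀ (a b : G) (c d e f : ZMod q),
      P (P (a, b) (c, d)) (e, f) = P (a, b) (c * e - d * f, c * f + d * e) :=
  basicFusionExp_mul_general hcard P hP
end
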